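/- With I_f(x) = x - f(x)/(a_n-a_1)², the map I_f has a unique fixed point λ ∈ ℝ (the unique zero of f), and for every x ∈ ℝ the iterates I_f^n(x) converge to λ. -/

import Mathlib

/-!
`f + E` is the mean of `a` under the Gibbs weights `exp (t * a i)`, and its derivative is the
corresponding variance, which lies in `(0, (a_n - a_1)² / 2]`. So `f` increases strictly from
`a_1 - E` to `a_n - E` and has a unique zero `λ`, while `I_f` is increasing with exactly the zeros
of `f` as fixed points. Below `λ` the map `I_f` moves points up and above `λ` down, so every orbit
is monotone and bounded by `λ`; its limit is a fixed point of the continuous map `I_f`, hence `λ`.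
-/

open Finset Filter Topology Function Real

section IterateMonotone

variable {α : Type*} [ConditionallyCompleteLinearOrder α] [TopologicalSpace α] [OrderTopology α]
  {g : α → α}

theorem exists_tendsto_iterate_of_le_map (hg : Monotone g) (hc : Continuous g) {x p : α}
    (hp : IsFixedPt g p) (hxp : x ≤ p) (hx : x ≤ g x) :
    ∃ q, IsFixedPt g q ∧ Tendsto (fun k => g^[k] x) atTop (𝓝 q) := by
  have hbdd : BddAbove (Set.range fun k => g^[k] x) :=
    ⟨p, Set.forall_mem_range.2 fun k => (hp.iterate k).eq ▸ hg.iterate k hxp⟩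
  have hlim := tendsto_atTop_ciSup (hg.monotone_iterate_of_le_map hx) hbdd
  exact ⟨_, isFixedPt_of_tendsto_iterate hlim hc.continuousAt, hlim⟩

theorem tendsto_iterate_of_monotone_of_unique_fixedPt (hg : Monotone g) (hc : Continuous g)
    {p : α} (hp : IsFixedPt g p) (huniq : ∀ q, IsFixedPt g q → q = p)
    (hbelow : ∀ x ≤ p, x ≤ g x) (habove : ∀ x, p ≤ x → g x ≤ x) (x : α) :
    Tendsto (fun k => g^[k] x) atTop (𝓝 p) := by
  obtain ⟨q, hq, hlim⟩ : ∃ q, IsFixedPt g q ∧ Tendsto (fun k => g^[k] x) atTop (𝓝 q) := by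
    rcases le_total x p with hxp | hpx
    · exact exists_tendsto_iterate_of_le_map hg hc hp hxp (hbelow x hxp)
    · exact exists_tendsto_iterate_of_le_map (α := αᵒᵈ) hg.dual hc hp hpx (habove x hpx)
  rwa [huniq q hq] at hlim

end IterateMonotone

theorem isFixedPt_sub_div_iff {𝕜 : Type*} [DivisionRing 𝕜] {f : 𝕜 → 𝕜} {c x : 𝕜} (hc : c ≠ 0) :
    IsFixedPt (fun t => t - f t / c) x ↔ f x = 0 := by
  simp [IsFixedPt, hc]

theorem tendsto_iterate_sub_div_of_hasDerivAt {f f' : ℝ → ℝ} {c : ℝ}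
    (hf : ∀ t, HasDerivAt f (f' t) t)
    (hpos : ∀ t, 0 < f' t) (hle : ∀ t, f' t ≤ c) {p : ℝ} (hp : f p = 0) (x : ℝ) :
    Tendsto (fun k => (fun t => t - f t / c)^[k] x) atTop (𝓝 p) := by
  have hc : 0 < c := (hpos 0).trans_le (hle 0)
  have hfmono : StrictMono f := strictMono_of_hasDerivAt_pos hf hpos
  have hgmono : Monotone fun t => t - f t / c :=
    monotone_of_hasDerivAt_nonneg (fun t => (hasDerivAt_id t).sub ((hf t).div_const c))
      fun t => sub_nonneg.2 ((div_le_one hc).2 (hle t))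
  have hgc : Continuous fun t => t - f t / c :=
    continuous_id.sub ((continuous_iff_continuousAt.2 fun t => (hf t).continuousAt).div_const c)
  refine tendsto_iterate_of_monotone_of_unique_fixedPt hgmono hgc
    ((isFixedPt_sub_div_iff hc.ne').2 hp)
    (fun q hq => hfmono.injective (((isFixedPt_sub_div_iff hc.ne').1 hq).trans hp.symm))
    (fun t ht => ?_) (fun t ht => ?_) x
  · have : f t ≤ 0 := hp ▸ hfmono.monotone ht
    simp only [le_sub_self_iff]
    exact div_nonpos_of_nonpos_of_nonneg this hc.le
  · have : 0 ≤ f t := hp ▸ hfmono.monotone ht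
    simp only [sub_le_self_iff]
    exact div_nonneg this hc.le

theorem two_mul_sum_sq_mul_sum_sub_sq {ι : Type*} (s : Finset ι) (w b : ι → ℝ) :
    2 * ((∑ i ∈ s, b i ^ 2 * w i) * (∑ i ∈ s, w i) - (∑ i ∈ s, b i * w i) ^ 2)
      = ∑ i ∈ s, ∑ j ∈ s, w i * w j * (b i - b j) ^ 2 := by
  have hexpand : ∀ i j, w i * w j * (b i - b j) ^ 2
      = b i ^ 2 * w i * w j + w i * (b j ^ 2 * w j) - 2 * (b i * w i) * (b j * w j) :=
    fun _ _ => by ring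
  simp only [hexpand, sum_add_distrib, sum_sub_distrib, ← mul_sum, ← sum_mul]
  ring

section ExpMean

variable {ι : Type*} [Fintype ι] (a : ι → ℝ)

noncomputable def expMean (t : ℝ) : ℝ :=
  (∑ i, a i * exp (t * a i)) / ∑ i, exp (t * a i)

-- The variance of `a` under the weights `exp (t * a i)`, in Lagrange's symmetric form.
noncomputable def expVariance (t : ℝ) : ℝ :=
  (∑ i, ∑ j, exp (t * a i) * exp (t * a j) * (a i - a j) ^ 2) / (2 * (∑ i, exp (t * a i)) ^ 2)

theorem sum_exp_mul_pos [Nonempty ι] (t : ℝ) : 0 < ∑ i, exp (t * a i) :=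
  sum_pos (fun _ _ => exp_pos _) univ_nonempty

theorem hasDerivAt_expMean [Nonempty ι] (t : ℝ) : HasDerivAt (expMean a) (expVariance a t) t := by
  have hS : HasDerivAt (fun t => ∑ i, exp (t * a i)) (∑ i, exp (t * a i) * a i) t :=
    HasDerivAt.fun_sum fun i _ => (hasDerivAt_mul_const (a i)).exp
  have hT : HasDerivAt (fun t => ∑ i, a i * exp (t * a i)) (∑ i, a i * (exp (t * a i) * a i)) t :=
    HasDerivAt.fun_sum fun i _ => ((hasDerivAt_mul_const (a i)).exp).const_mul (a i)
  refine (hT.fun_div hS (sum_exp_mul_pos a t).ne').congr_deriv ?_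
  have hT' : ∑ i, a i * (exp (t * a i) * a i) = ∑ i, a i ^ 2 * exp (t * a i) :=
    sum_congr rfl fun i _ => by ring
  have hS' : ∑ i, exp (t * a i) * a i = ∑ i, a i * exp (t * a i) :=
    sum_congr rfl fun i _ => mul_comm _ _
  rw [hT', hS', expVariance, ← two_mul_sum_sq_mul_sum_sub_sq,
    mul_div_mul_left _ _ two_ne_zero]
  ring

theorem expVariance_pos {i j : ι} (hij : a i ≠ a j) (t : ℝ) : 0 < expVariance a t := by
  have : Nonempty ι := ⟨i⟩
  have hS := sum_exp_mul_pos a t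
  have hij' := sub_ne_zero.2 hij
  refine div_pos ?_ (by positivity)
  exact sum_pos' (fun i _ => sum_nonneg fun j _ => by positivity)
    ⟨i, mem_univ _, sum_pos' (fun j _ => by positivity) ⟨j, mem_univ _, by positivity⟩⟩

theorem expVariance_le [Nonempty ι] {C : ℝ} (h : ∀ i j, (a i - a j) ^ 2 ≤ C) (t : ℝ) :
    expVariance a t ≤ C / 2 := by
  have hS := sum_exp_mul_pos a t
  rw [expVariance, div_le_iff₀ (by positivity)]
  calc ∑ i, ∑ j, exp (t * a i) * exp (t * a j) * (a i - a j) ^ 2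
      ≤ ∑ i, ∑ j, exp (t * a i) * exp (t * a j) * C := by gcongr with i _ j _; exact h i j
    _ = C / 2 * (2 * (∑ i, exp (t * a i)) ^ 2) := by
      rw [sq, sum_mul_sum]
      simp only [← sum_mul]
      ring

theorem expMean_eq_shift (c t : ℝ) :
    expMean a t = (∑ i, a i * exp (t * (a i - c))) / ∑ i, exp (t * (a i - c)) := by
  simp only [mul_sub, exp_sub, mul_div_assoc', ← sum_div]
  exact (div_div_div_cancel_right₀ (exp_ne_zero _) _ _).symm

theorem tendsto_expMean_of_tendsto_atBot {l : Filter ℝ} {i₀ : ι}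
    (h : ∀ i ≠ i₀, Tendsto (fun t => t * (a i - a i₀)) l atBot) :
    Tendsto (expMean a) l (𝓝 (a i₀)) := by
  classical
  have hw : ∀ i, Tendsto (fun t => exp (t * (a i - a i₀))) l (𝓝 (if i = i₀ then 1 else 0)) := by
    intro i
    split_ifs with hi
    · simpa [hi] using tendsto_const_nhds
    · exact tendsto_exp_atBot.comp (h i hi)
  have hnum := tendsto_finsetSum univ fun i _ => (hw i).const_mul (a i)
  have hden := tendsto_finsetSum univ fun i _ => hw i
  simp only [mul_ite, mul_one, mul_zero, sum_ite_eq', mem_univ, if_true] at hnum hden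
  rw [funext (expMean_eq_shift a (a i₀))]
  have hlim := hnum.div hden one_ne_zero
  rw [div_one] at hlim
  exact hlim

theorem tendsto_expMean_atTop {i₀ : ι} (h : ∀ i ≠ i₀, a i < a i₀) :
    Tendsto (expMean a) atTop (𝓝 (a i₀)) :=
  tendsto_expMean_of_tendsto_atBot a fun i hi => tendsto_id.atTop_mul_const_of_neg (sub_neg.2 (h i hi))

theorem tendsto_expMean_atBot {i₀ : ι} (h : ∀ i ≠ i₀, a i₀ < a i) :
    Tendsto (expMean a) atBot (𝓝 (a i₀)) :=
  tendsto_expMean_of_tendsto_atBot a fun i hi => tendsto_id.atBot_mul_const (sub_pos.2 (h i hi))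

theorem exists_expMean_eq {i₀ i₁ : ι} (hmin : ∀ i ≠ i₀, a i₀ < a i)
    (hmax : ∀ i ≠ i₁, a i < a i₁) {E : ℝ} (h₀ : a i₀ < E) (h₁ : E < a i₁) :
    ∃ t, expMean a t = E := by
  have : Nonempty ι := ⟨i₀⟩
  obtain ⟨t₀, ht₀⟩ := ((tendsto_expMean_atBot a hmin).eventually (eventually_lt_nhds h₀)).exists
  obtain ⟨t₁, ht₁⟩ := ((tendsto_expMean_atTop a hmax).eventually (eventually_gt_nhds h₁)).exists
  have hc : Continuous (expMean a) :=
    continuous_iff_continuousAt.2 fun t => (hasDerivAt_expMean a t).continuousAt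
  exact intermediate_value_univ t₀ t₁ hc ⟨ht₀.le, ht₁.le⟩

end ExpMean

theorem If_unique_fixed_point_and_convergence (n : ℕ) (hn : 2 ≤ n) (a : Fin n → ℝ)
    (ha : StrictMono a) (E : ℝ)
    (hE1 : a ⟨0, by omega⟩ < E) (hE2 : E < a ⟨n - 1, by omega⟩)
    (f : ℝ → ℝ)
    (hf : f = fun t : ℝ => (∑ i, a i * Real.exp (t * a i)) / (∑ i, Real.exp (t * a i)) - E)
    (If : ℝ → ℝ)
    (hIf : If = fun t : ℝ => t - f t / (a ⟨n - 1, by omega⟩ - a ⟨0, by omega⟩) ^ 2) :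
    ∃ lam : ℝ, f lam = 0 ∧ If lam = lam ∧ (∀ mu : ℝ, If mu = mu → mu = lam) ∧
      ∀ x : ℝ, Tendsto (fun k : ℕ => If^[k] x) atTop (𝓝 lam) := by
  set i₀ : Fin n := ⟨0, by omega⟩
  set i₁ : Fin n := ⟨n - 1, by omega⟩
  have : Nonempty (Fin n) := ⟨i₀⟩
  have h₀ : ∀ i, i₀ ≤ i := fun i => Fin.le_def.2 i.val.zero_le
  have h₁ : ∀ i, i ≤ i₁ := fun i => Fin.le_def.2 (Nat.le_sub_one_of_lt i.isLt)
  have hmin : ∀ i ≠ i₀, a i₀ < a i := fun i hi => ha ((h₀ i).lt_of_ne' hi)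
  have hmax : ∀ i ≠ i₁, a i < a i₁ := fun i hi => ha ((h₁ i).lt_of_ne hi)
  have hspread : ∀ i j, (a i - a j) ^ 2 ≤ (a i₁ - a i₀) ^ 2 := fun i j =>
    sq_le_sq' (by linarith [ha.monotone (h₀ i), ha.monotone (h₁ j)])
      (by linarith [ha.monotone (h₁ i), ha.monotone (h₀ j)])
  have hderiv : ∀ t, HasDerivAt f (expVariance a t) t := by
    subst hf
    exact fun t => (hasDerivAt_expMean a t).sub_const E
  have hpos : ∀ t, 0 < expVariance a t :=
    expVariance_pos a (hmax i₀ (Fin.ne_of_val_ne (by simp [i₀, i₁]; omega))).ne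
  have hle : ∀ t, expVariance a t ≤ (a i₁ - a i₀) ^ 2 := fun t =>
    (expVariance_le a hspread t).trans (half_le_self (sq_nonneg _))
  obtain ⟨lam, hlam⟩ := exists_expMean_eq a hmin hmax hE1 hE2
  have hflam : f lam = 0 := by rw [hf]; exact sub_eq_zero.2 hlam
  have hK : (a i₁ - a i₀) ^ 2 ≠ 0 := ((hpos 0).trans_le (hle 0)).ne'
  subst hIf
  refine ⟨lam, hflam, (isFixedPt_sub_div_iff hK).2 hflam, fun mu hmu => ?_,
    tendsto_iterate_sub_div_of_hasDerivAt hderiv hpos hle hflam⟩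
  exact (strictMono_of_hasDerivAt_pos hderiv hpos).injective
    (((isFixedPt_sub_div_iff hK).1 hmu).trans hflam.symm)
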